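/- arXiv:2508.21499 — 2 statements merged into one kernel-verified Lean document; each statement's English description precedes it below -/
import Mathlib

section
/- Let D be a proper domain in a Banach space E with distance-to-boundary function d_D. If u, v ∈ D, α is a rectifiable curve in D joining u and v, w ∈ α, c ≥ 1, and ℓ(α[u,w]) ≤ c·d_D(w), then d_D(w) ≥ max{(2ℓ(α[u,w]) + d_D(u))/(4c), d_D(u)/(2c)}. -/
open Set ENNReal

variable {E : Type*} [NormedAddCommGroup E]

/-- Distance to the boundary (= distance to the complement, for open sets). -/
noncomputable def dD (D : Set E) (z : E) : ℝ := Metric.infDist z Dᶜ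

/-- A continuous curve with image in `D`, parametrized on `[a,b]`. -/
structure CurveIn (D : Set E) (a b : ℝ) (γ : ℝ → E) : Prop where
  le : a ≤ b
  cont : ContinuousOn γ (Set.Icc a b)
  mem : ∀ t ∈ Set.Icc a b, γ t ∈ D

/-- Arc length of `γ` on `[s,t]` (as a real number; finite iff rectifiable). -/
noncomputable def len (γ : ℝ → E) (s t : ℝ) : ℝ :=
  (eVariationOn γ (Set.Icc s t)).toReal

/-- Quasihyperbolic length of `γ` over a parameter set, defined as the supremum of
weighted Riemann sums `Σ |γ(t_{i+1}) - γ(t_i)| / d_D(γ(t_i))` over monotone sequences. -/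
noncomputable def qhVar (D : Set E) (γ : ℝ → E) (s : Set ℝ) : ℝ≥0∞ :=
  ⨆ p : ℕ × { u : ℕ → ℝ // Monotone u ∧ ∀ i, u i ∈ s },
    ∑ i ∈ Finset.range p.1,
      ENNReal.ofReal (dist (γ (p.2.1 (i + 1))) (γ (p.2.1 i)) / dD D (γ (p.2.1 i)))

/-- Quasihyperbolic distance: infimum of quasihyperbolic lengths of curves in `D`
joining `x` and `y`. -/
noncomputable def qhDist (D : Set E) (x y : E) : ℝ :=
  (⨅ q : { q : ℝ × ℝ × (ℝ → E) //
      CurveIn D q.1 q.2.1 q.2.2 ∧ q.2.2 q.1 = x ∧ q.2.2 q.2.1 = y },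
    qhVar D q.1.2.2 (Set.Icc q.1.1 q.1.2.1)).toReal

/-- Inner (intrinsic) distance in `D`: infimum of arc lengths of curves in `D`
joining `x` and `y`. -/
noncomputable def innerDist (D : Set E) (x y : E) : ℝ :=
  (⨅ q : { q : ℝ × ℝ × (ℝ → E) //
      CurveIn D q.1 q.2.1 q.2.2 ∧ q.2.2 q.1 = x ∧ q.2.2 q.2.1 = y },
    eVariationOn q.1.2.2 (Set.Icc q.1.1 q.1.2.1)).toReal

/-- A proper domain: open, connected, and not the whole space. -/
def IsProperDomain (D : Set E) : Prop := IsOpen D ∧ IsConnected D ∧ D ≠ Set.univ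

/-- `(D, k_D)` is δ-Gromov hyperbolic (Gromov product formulation). -/
def GromovHyp (D : Set E) (δ : ℝ) : Prop :=
  ∀ x ∈ D, ∀ y ∈ D, ∀ z ∈ D, ∀ p ∈ D,
    (qhDist D p x + qhDist D p z - qhDist D x z) / 2 ≥
      min ((qhDist D p x + qhDist D p y - qhDist D x y) / 2)
          ((qhDist D p y + qhDist D p z - qhDist D y z) / 2) - δ

/-- A `c`-quasigeodesic in `D`: `ℓ_k(γ[s,t]) ≤ c·k_D(γ s, γ t)` for all parameters. -/
def IsQuasigeodesic (D : Set E) (c : ℝ) (a b : ℝ) (γ : ℝ → E) : Prop :=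
  CurveIn D a b γ ∧
    ∀ s t, a ≤ s → s ≤ t → t ≤ b →
      qhVar D γ (Set.Icc s t) ≤ ENNReal.ofReal (c * qhDist D (γ s) (γ t))

/-- An `h`-short arc in `D`: `ℓ_k(γ[s,t]) ≤ k_D(γ s, γ t) + h` for all parameters. -/
def ShortArc (D : Set E) (h : ℝ) (a b : ℝ) (γ : ℝ → E) : Prop :=
  CurveIn D a b γ ∧
    ∀ s t, a ≤ s → s ≤ t → t ≤ b →
      qhVar D γ (Set.Icc s t) ≤ ENNReal.ofReal (qhDist D (γ s) (γ t) + h)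

/-- The coefficient `c^λ_{x,y} = min{1 + λ/(2 k_D(x,y)), 9/8}`. -/
noncomputable def lamCoef (D : Set E) (lam : ℝ) (x y : E) : ℝ :=
  min (1 + lam / (2 * qhDist D x y)) (9 / 8)

/-- A λ-curve: a `c^λ_{x,y}`-quasigeodesic with endpoints `x = γ a`, `y = γ b`. -/
def IsLambdaCurve (D : Set E) (lam : ℝ) (a b : ℝ) (γ : ℝ → E) : Prop :=
  CurveIn D a b γ ∧
    ∀ s t, a ≤ s → s ≤ t → t ≤ b →
      qhVar D γ (Set.Icc s t) ≤
        ENNReal.ofReal (lamCoef D lam (γ a) (γ b) * qhDist D (γ s) (γ t))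

/-- A `c`-cone arc (John curve): double cone condition with constant `c`. -/
def ConeArc (D : Set E) (c : ℝ) (a b : ℝ) (γ : ℝ → E) : Prop :=
  ∀ t ∈ Set.Icc a b, min (len γ a t) (len γ t b) ≤ c * dD D (γ t)

/-- A `c`-John domain. -/
def IsJohnDomain (D : Set E) (c : ℝ) : Prop :=
  ∀ x ∈ D, ∀ y ∈ D, ∃ a b γ, CurveIn D a b γ ∧
    eVariationOn γ (Set.Icc a b) ≠ ⊤ ∧ γ a = x ∧ γ b = y ∧ ConeArc D c a b γ

/-- A `c`-uniform arc: cone condition plus `ℓ(γ) ≤ c·|γ a − γ b|`. -/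
def IsUniformArc (D : Set E) (c : ℝ) (a b : ℝ) (γ : ℝ → E) : Prop :=
  CurveIn D a b γ ∧ ConeArc D c a b γ ∧ len γ a b ≤ c * ‖γ a - γ b‖

/-- A `c`-inner uniform arc: cone condition plus the Gehring–Hayman inequality
`ℓ(γ) ≤ c·σ_D(γ a, γ b)`. -/
def IsInnerUniformArc (D : Set E) (c : ℝ) (a b : ℝ) (γ : ℝ → E) : Prop :=
  CurveIn D a b γ ∧ ConeArc D c a b γ ∧ len γ a b ≤ c * innerDist D (γ a) (γ b)

/-- A `c`-inner uniform domain. -/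
def IsInnerUniform (D : Set E) (c : ℝ) : Prop :=
  ∀ x ∈ D, ∀ y ∈ D, ∃ a b γ, γ a = x ∧ γ b = y ∧ IsInnerUniformArc D c a b γ

theorem stmt0 {E : Type*} [NormedAddCommGroup E] [NormedSpace ℝ E] [CompleteSpace E]
    (D : Set E) (hD : IsProperDomain D) (a b : ℝ) (γ : ℝ → E)
    (hγ : CurveIn D a b γ) (hrect : eVariationOn γ (Set.Icc a b) ≠ ⊤)
    (c : ℝ) (hc : 1 ≤ c) (t : ℝ) (ht : t ∈ Set.Icc a b)
    (hlen : len γ a t ≤ c * dD D (γ t)) :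
    dD D (γ t) ≥
      max ((2 * len γ a t + dD D (γ a)) / (4 * c)) (dD D (γ a) / (2 * c)) := by
  have hc0 : (0:ℝ) < c := lt_of_lt_of_le one_pos hc
  have hdw0 : 0 ≤ dD D (γ t) := Metric.infDist_nonneg
  have hsub : Set.Icc a t ⊆ Set.Icc a b := Set.Icc_subset_Icc le_rfl ht.2
  have hmono := eVariationOn.mono γ hsub
  have hfin : eVariationOn γ (Set.Icc a t) ≠ ⊤ := ne_top_of_le_ne_top hrect hmono
  have hedist : edist (γ a) (γ t) ≤ eVariationOn γ (Set.Icc a t) :=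
    eVariationOn.edist_le γ (Set.left_mem_Icc.2 ht.1) (Set.right_mem_Icc.2 ht.1)
  have hdist : dist (γ a) (γ t) ≤ len γ a t := by
    rw [dist_edist, len]
    exact ENNReal.toReal_mono hfin hedist
  have hdu : dD D (γ a) ≤ dD D (γ t) + dist (γ a) (γ t) :=
    Metric.infDist_le_infDist_add_dist
  have hdu' : dD D (γ a) ≤ dD D (γ t) + len γ a t := hdu.trans (by linarith)
  rw [ge_iff_le, max_le_iff]
  constructor
  · rw [div_le_iff₀ (by linarith)]
    nlinarith
  · rw [div_le_iff₀ (by linarith)]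
    nlinarith
end

section
/- For distinct points x, y in a proper domain D of a Banach space and λ ∈ (0, 1/4], every λ-curve γ ∈ Λ^λ_{xy}(D) is λ-short, i.e., ℓ_k(γ[z₁,z₂]) ≤ k_D(z₁,z₂) + λ for all z₁, z₂ ∈ γ. -/
open Set ENNReal

variable {E : Type*} [NormedAddCommGroup E]

lemma qhVar_mono (D : Set E) (γ : ℝ → E) {s t : Set ℝ} (h : s ⊆ t) :
    qhVar D γ s ≤ qhVar D γ t := by
  refine iSup_le fun p => ?_
  exact le_iSup_of_le ⟨p.1, p.2.1, p.2.2.1, fun i => h (p.2.2.2 i)⟩ le_rfl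

lemma qhDist_le_toReal (D : Set E) {s t : ℝ} {γ : ℝ → E} (hc : CurveIn D s t γ)
    (hfin : qhVar D γ (Set.Icc s t) ≠ ⊤) :
    qhDist D (γ s) (γ t) ≤ (qhVar D γ (Set.Icc s t)).toReal := by
  apply ENNReal.toReal_mono hfin
  exact iInf_le_of_le ⟨(s, t, γ), hc, rfl, rfl⟩ le_rfl

theorem stmt7 {E : Type*} [NormedAddCommGroup E] [NormedSpace ℝ E] [CompleteSpace E]
    (D : Set E) (hD : IsProperDomain D) (lam : ℝ) (hlam : lam ∈ Set.Ioc 0 (1 / 4))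
    (a b : ℝ) (γ : ℝ → E) (hne : γ a ≠ γ b)
    (hγ : IsLambdaCurve D lam a b γ) :
    ShortArc D lam a b γ := by
  obtain ⟨hcur, hquasi⟩ := hγ
  refine ⟨hcur, fun s t hs hst htb => ?_⟩
  set x := γ a
  set y := γ b
  set K := qhDist D x y with hK
  set M := qhDist D (γ s) (γ t) with hM
  set c := lamCoef D lam x y with hc
  have hK0 : 0 ≤ K := ENNReal.toReal_nonneg
  have hM0 : 0 ≤ M := ENNReal.toReal_nonneg
  have hlam0 : 0 < lam := hlam.1
  have hdivnn : 0 ≤ lam / (2 * K) := by positivity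
  have hc1 : 1 ≤ c := le_min (by linarith) (by norm_num)
  have hcK : c ≤ 9 / 8 := min_le_right _ _
  have hcle : c ≤ 1 + lam / (2 * K) := min_le_left _ _
  have h1 := hquasi s t hs hst htb
  have h2 := hquasi a b le_rfl hcur.le le_rfl
  have hsub : Set.Icc s t ⊆ Set.Icc a b := Set.Icc_subset_Icc hs htb
  have hfin : qhVar D γ (Set.Icc s t) ≠ ⊤ :=
    ne_top_of_le_ne_top ENNReal.ofReal_ne_top h1
  have hcurst : CurveIn D s t γ :=
    ⟨hst, hcur.cont.mono hsub, fun u hu => hcur.mem u (hsub hu)⟩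
  have hMle : M ≤ c * K := by
    have := (qhDist_le_toReal D hcurst hfin).trans
      (ENNReal.toReal_mono ENNReal.ofReal_ne_top
        ((qhVar_mono D γ hsub).trans h2))
    rwa [ENNReal.toReal_ofReal (by positivity)] at this
  refine h1.trans (ENNReal.ofReal_le_ofReal ?_)
  have hMK : M ≤ (9 / 8) * K := hMle.trans (by nlinarith)
  rcases eq_or_lt_of_le hK0 with h0 | hKpos
  · have : lam / (2 * K) = 0 := by rw [← h0]; simp
    nlinarith [mul_le_mul_of_nonneg_right hcle hM0]
  · have key : lam / (2 * K) * M ≤ lam := by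
      rw [div_mul_eq_mul_div, div_le_iff₀ (by linarith)]
      nlinarith
    nlinarith [mul_le_mul_of_nonneg_right hcle hM0]
end
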